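/- If W_new < W (both positive integers) and r ∈ (0,1), then the parallel speedup estimate S^p = (W / W_new) · (1 - (1-r)^{W_new}) / (1 - (1-r)^W) is strictly greater than 1. -/
import Mathlib

theorem parallel_speedup_gt_one
    (r : ℝ) (hr0 : 0 < r) (hr1 : r < 1)
    (W Wnew : ℕ) (hWnew : 0 < Wnew) (hlt : Wnew < W) :
    1 < ((W : ℝ) / (Wnew : ℝ)) *
        ((1 - (1 - r) ^ Wnew) / (1 - (1 - r) ^ W)) := by
  set q : ℝ := 1 - r with hq
  have hq0 : 0 < q := by simp [hq]; linarith
  have hq1 : q < 1 := by simp [hq]; linarith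
  -- geometric sums
  have hgeom : ∀ n : ℕ, 1 - q ^ n = (1 - q) * ∑ i ∈ Finset.range n, q ^ i := by
    intro n
    rw [geom_sum_eq (ne_of_lt hq1)]
    have : q - 1 ≠ 0 := by linarith
    field_simp
    ring
  have hA : ∀ i ∈ Finset.range Wnew, q ^ (Wnew - 1) ≤ q ^ i := by
    intro i hi
    simp only [Finset.mem_range] at hi
    exact pow_le_pow_of_le_one hq0.le hq1.le (by omega)
  have hB : ∀ i ∈ Finset.Ico Wnew W, q ^ i ≤ q ^ Wnew := by
    intro i hi
    simp only [Finset.mem_Ico] at hi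
    exact pow_le_pow_of_le_one hq0.le hq1.le hi.1
  set A : ℝ := ∑ i ∈ Finset.range Wnew, q ^ i with hAdef
  set B : ℝ := ∑ i ∈ Finset.Ico Wnew W, q ^ i with hBdef
  have hAge : (Wnew : ℝ) * q ^ (Wnew - 1) ≤ A := by
    have := Finset.card_nsmul_le_sum (Finset.range Wnew) _ _ hA
    simpa [nsmul_eq_mul] using this
  have hBle : B ≤ ((W : ℝ) - Wnew) * q ^ Wnew := by
    have := Finset.sum_le_card_nsmul (Finset.Ico Wnew W) _ _ hB
    have hc : (Finset.Ico Wnew W).card = W - Wnew := Nat.card_Ico _ _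
    rw [hc, nsmul_eq_mul] at this
    have : B ≤ ((W - Wnew : ℕ) : ℝ) * q ^ Wnew := this
    rwa [Nat.cast_sub hlt.le] at this
  have hsplit : ∑ i ∈ Finset.range W, q ^ i = A + B := by
    rw [hAdef, hBdef]
    exact (Finset.sum_range_add_sum_Ico _ hlt.le).symm
  have hWd : (0:ℝ) < (W:ℝ) - Wnew := by
    have : (Wnew:ℝ) < W := by exact_mod_cast hlt
    linarith
  have hWn : (0:ℝ) < (Wnew:ℝ) := by exact_mod_cast hWnew
  have hqpow : q ^ Wnew < q ^ (Wnew - 1) := by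
    apply pow_lt_pow_right_of_lt_one₀ hq0 hq1
    omega
  have hkey : (Wnew:ℝ) * (A + B) < (W:ℝ) * A := by
    have h1 : (Wnew:ℝ) * B ≤ (Wnew:ℝ) * (((W:ℝ) - Wnew) * q ^ Wnew) := by
      exact mul_le_mul_of_nonneg_left hBle hWn.le
    have h2 : (Wnew:ℝ) * (((W:ℝ) - Wnew) * q ^ Wnew)
        < (Wnew:ℝ) * (((W:ℝ) - Wnew) * q ^ (Wnew - 1)) := by
      apply mul_lt_mul_of_pos_left _ hWn
      exact mul_lt_mul_of_pos_left hqpow hWd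
    have h3 : ((W:ℝ) - Wnew) * ((Wnew:ℝ) * q ^ (Wnew - 1)) ≤ ((W:ℝ) - Wnew) * A :=
      mul_le_mul_of_nonneg_left hAge hWd.le
    nlinarith
  -- translate to the original expression
  have h1n : 0 < 1 - q ^ Wnew := by
    have := pow_lt_one₀ hq0.le hq1 (by omega : Wnew ≠ 0)
    linarith
  have h1W : 0 < 1 - q ^ W := by
    have hp : q ^ W < 1 := pow_lt_one₀ hq0.le hq1 (by omega : W ≠ 0)
    linarith
  have hmain : (Wnew:ℝ) * (1 - q ^ W) < (W:ℝ) * (1 - q ^ Wnew) := by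
    rw [hgeom W, hgeom Wnew, hsplit]
    have hr' : (0:ℝ) < 1 - q := by simp [hq]; linarith
    calc (Wnew:ℝ) * ((1-q) * (A + B)) = (1-q) * ((Wnew:ℝ) * (A+B)) := by ring
      _ < (1-q) * ((W:ℝ) * A) := by exact mul_lt_mul_of_pos_left hkey hr'
      _ = (W:ℝ) * ((1-q) * A) := by ring
  rw [div_mul_div_comm, lt_div_iff₀ (by positivity), one_mul]
  linarith
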